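/- arXiv:2201.05808 — 3 statements merged into one kernel-verified Lean document; each statement's English description precedes it below -/
import Mathlib

section
/- For all p ∈ (0,2), x ∈ (0,1): the inequality p³(6+18x) + 2px(4-p²)(5+x) + (1-x)(8-x)(4-p²) < 9p²(1-x) has no solution. -/
/-!
Writing the difference of the two sides in the basis `x`, `1 - x`, `(1 - x)²` gives
`12 p (p² + 4) x + 4 (2p³ - 4p² - 2p + 7) (1 - x) + (4 - p²)(1 + 2p)(1 - x)²`,
and every coefficient is nonnegative for `0 ≤ p ≤ 2`.
-/

lemma two_mul_cube_sub_add_pos {p : ℝ} (hp : 0 ≤ p) : 0 < 2 * p ^ 3 - 4 * p ^ 2 - 2 * p + 7 := by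
  have key : 2 * p ^ 3 - 4 * p ^ 2 - 2 * p + 7
      = 2 * p * (p - 3 / 2) ^ 2 + 2 * (p - 13 / 8) ^ 2 + 55 / 32 := by ring
  rw [key]
  positivity

lemma hankel_bound_sub_eq (p x : ℝ) :
    p^3*(6 + 18*x) + 2*p*x*(4 - p^2)*(5 + x) + (1 - x)*(8 - x)*(4 - p^2) - 9*p^2*(1 - x)
      = 12 * p * (p ^ 2 + 4) * x + 4 * (2 * p ^ 3 - 4 * p ^ 2 - 2 * p + 7) * (1 - x)
        + (4 - p ^ 2) * (1 + 2 * p) * (1 - x) ^ 2 := by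
  ring

lemma hankel_bound_le {p x : ℝ} (hp : p ∈ Set.Icc (0:ℝ) 2) (hx : x ∈ Set.Icc (0:ℝ) 1) :
    9*p^2*(1 - x)
      ≤ p^3*(6 + 18*x) + 2*p*x*(4 - p^2)*(5 + x) + (1 - x)*(8 - x)*(4 - p^2) := by
  obtain ⟨hp0, hp2⟩ := hp
  obtain ⟨hx0, hx1⟩ := hx
  have h4 : 0 ≤ 4 - p ^ 2 := by nlinarith
  have hcubic := two_mul_cube_sub_add_pos hp0
  rw [← sub_nonneg, hankel_bound_sub_eq]
  have hy : 0 ≤ 1 - x := sub_nonneg.2 hx1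
  positivity

theorem stmt_7 (p x : ℝ) (hp : p ∈ Set.Ioo (0:ℝ) 2) (hx : x ∈ Set.Ioo (0:ℝ) 1) :
    ¬ (p^3*(6 + 18*x) + 2*p*x*(4 - p^2)*(5 + x) + (1 - x)*(8 - x)*(4 - p^2)
        < 9*p^2*(1 - x)) :=
  not_lt.2 (hankel_bound_le (Set.Ioo_subset_Icc_self hp) (Set.Ioo_subset_Icc_self hx))
end

section
/- The polynomial p(16384 - 25600p² + 12944p⁴ - 2048p⁶ - 51p⁸) has exactly one root in the open interval (0,2), located approximately at p ≈ 1.20671. -/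
/-!
Writing `t = p²`, the polynomial is `p · q(t)` with `q` the quartic below, so its roots in `(0, 2)`
are the square roots of the roots of `q` in `(0, 4)`. The quartic is strictly decreasing on
`[0, 1.8]` (its difference quotients are negative there) and negative on `[1.8, 4]`, so it has at
most one root in `[0, 4]`; a sign change of `q(p²)` on `[1.206, 1.2075]` produces it.
-/

open Set

noncomputable section

def hankelQuartic (t : ℝ) : ℝ := 16384 - 25600*t + 12944*t^2 - 2048*t^3 - 51*t^4

lemma continuous_hankelQuartic : Continuous hankelQuartic := by
  unfold hankelQuartic
  fun_prop

lemma hankelQuartic_strictAntiOn : StrictAntiOn hankelQuartic (Icc 0 1.8) := by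
  intro s ⟨hs, _⟩ t ⟨_, ht⟩ hst
  have hquot : 0 < 25600 - 12944*(s+t) + 2048*(s^2+s*t+t^2) + 51*(s^3+s^2*t+s*t^2+t^3) := by
    have h1 : 0 ≤ 1.8 - t := by linarith
    have h2 : 0 ≤ 1.8 - s := by linarith
    have h3 : 0 ≤ t := by linarith
    nlinarith [mul_nonneg h1 h2, mul_nonneg hs h3, mul_nonneg h1 h3, mul_nonneg h2 hs,
      mul_nonneg hs h1, mul_nonneg h2 h3, mul_nonneg (mul_nonneg h1 h2) hs,
      mul_nonneg (mul_nonneg h1 h2) h3, sq_nonneg (s - t)]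
  have hdiff : hankelQuartic s - hankelQuartic t =
      (t - s) * (25600 - 12944*(s+t) + 2048*(s^2+s*t+t^2) + 51*(s^3+s^2*t+s*t^2+t^3)) := by
    unfold hankelQuartic
    ring
  nlinarith [mul_pos (sub_pos.2 hst) hquot]

lemma hankelQuartic_neg_of_mem_Icc {t : ℝ} (ht : t ∈ Icc (1.8 : ℝ) 4) : hankelQuartic t < 0 := by
  obtain ⟨h0, h1⟩ := ht
  unfold hankelQuartic
  nlinarith [mul_nonneg (sub_nonneg.2 h0) (sub_nonneg.2 h1), sq_nonneg (t - 2), sq_nonneg (t - 1.9),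
    mul_nonneg (mul_nonneg (sub_nonneg.2 h0) (sub_nonneg.2 h1)) (sub_nonneg.2 h1),
    mul_nonneg (mul_nonneg (sub_nonneg.2 h0) (sub_nonneg.2 h1)) (sub_nonneg.2 h0)]

lemma mem_Icc_of_hankelQuartic_eq_zero {t : ℝ} (ht : t ∈ Icc (0 : ℝ) 4)
    (hq : hankelQuartic t = 0) : t ∈ Icc (0 : ℝ) 1.8 := by
  refine ⟨ht.1, le_of_not_gt fun h => ?_⟩
  exact (hankelQuartic_neg_of_mem_Icc ⟨h.le, ht.2⟩).ne hq

lemma eq_of_hankelQuartic_eq_zero {s t : ℝ} (hs : s ∈ Icc (0 : ℝ) 4) (ht : t ∈ Icc (0 : ℝ) 4)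
    (hqs : hankelQuartic s = 0) (hqt : hankelQuartic t = 0) : s = t :=
  hankelQuartic_strictAntiOn.injOn (mem_Icc_of_hankelQuartic_eq_zero hs hqs)
    (mem_Icc_of_hankelQuartic_eq_zero ht hqt) (hqs.trans hqt.symm)

lemma exists_hankelQuartic_sq_eq_zero : ∃ p ∈ Icc (1.206 : ℝ) 1.2075, hankelQuartic (p^2) = 0 := by
  have hcont : ContinuousOn (fun p : ℝ => hankelQuartic (p^2)) (Icc 1.206 1.2075) :=
    (continuous_hankelQuartic.comp (continuous_pow 2)).continuousOn
  have hsign : (0 : ℝ) ∈ Icc (hankelQuartic (1.2075^2)) (hankelQuartic (1.206^2)) := by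
    unfold hankelQuartic
    constructor <;> norm_num
  exact intermediate_value_Icc' (by norm_num) hcont hsign

end

theorem stmt_10 :
    ∃ p₀ : ℝ, p₀ ∈ Set.Ioo (0:ℝ) 2 ∧
      p₀ * (16384 - 25600*p₀^2 + 12944*p₀^4 - 2048*p₀^6 - 51*p₀^8) = 0 ∧
      |p₀ - 1.20671| < 0.001 ∧
      ∀ p ∈ Set.Ioo (0:ℝ) 2,
        p * (16384 - 25600*p^2 + 12944*p^4 - 2048*p^6 - 51*p^8) = 0 → p = p₀ := by
  have hpoly (p : ℝ) : p * (16384 - 25600*p^2 + 12944*p^4 - 2048*p^6 - 51*p^8) =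
      p * hankelQuartic (p^2) := by
    unfold hankelQuartic
    ring
  obtain ⟨p₀, ⟨hlo, hhi⟩, hq₀⟩ := exists_hankelQuartic_sq_eq_zero
  refine ⟨p₀, ⟨by linarith, by linarith⟩, by rw [hpoly, hq₀, mul_zero],
    abs_sub_lt_iff.2 ⟨by linarith, by linarith⟩, ?_⟩
  rintro p ⟨hp0, hp2⟩ hp
  rw [hpoly] at hp
  have hq : hankelQuartic (p^2) = 0 := (mul_eq_zero.1 hp).resolve_left hp0.ne'
  have hsq : p^2 = p₀^2 :=
    eq_of_hankelQuartic_eq_zero ⟨by positivity, by nlinarith⟩ ⟨by positivity, by nlinarith⟩ hq hq₀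
  exact (pow_left_inj₀ hp0.le (by linarith) two_ne_zero).1 hsq
end

section
/- For every q ∈ (0,1) and x ∈ [0,1], 262144(1-x²)((1+q²)(1+q)² + q²x²) + 32768x³(5-q)(1+q+q²)² is a decreasing function of x on [0,1], and its maximum value 262144(1+q²)(1+q)² is attained at x = 0. -/
/-!
Up to the factor `32768`, `f x = 8 (1 - x²) (A + q² x²) + B x³` with `A = (1 + q²)(1 + q)²` and
`B = (5 - q)(1 + q + q²)²`. Its derivative is `-x g(x)` with
`g(x) = 16 (A - q²) + 32 q² x² - 3 B x`. Since `64 q² ≤ 3 B`, the quadratic `g` decreases on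
`[0, 1]`, and `g(1) = 16 (A + q²) - 3 B ≥ 0`; so `f' ≤ 0` there and the maximum is at `x = 0`.
-/

open Set

theorem hasDerivAt_quartic (A B c x : ℝ) :
    HasDerivAt (fun x : ℝ => 8 * (1 - x ^ 2) * (A + c * x ^ 2) + B * x ^ 3)
      (-x * (16 * (A - c) + 32 * c * x ^ 2 - 3 * B * x)) x := by
  have h2 := hasDerivAt_pow 2 x
  have h3 := hasDerivAt_pow 3 x
  refine ((((h2.const_sub 1).const_mul 8).mul ((h2.const_mul c).const_add A)).add
    (h3.const_mul B)).congr_deriv ?_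
  simp only [Nat.cast_ofNat, Nat.add_one_sub_one]
  ring

theorem antitoneOn_quartic {A B c : ℝ} (hc : 0 ≤ c) (hslope : 64 * c ≤ 3 * B)
    (hend : 3 * B ≤ 16 * (A + c)) :
    AntitoneOn (fun x : ℝ => 8 * (1 - x ^ 2) * (A + c * x ^ 2) + B * x ^ 3) (Icc 0 1) := by
  refine antitoneOn_of_hasDerivWithinAt_nonpos (convex_Icc 0 1) (by fun_prop)
    (fun x _ => (hasDerivAt_quartic A B c x).hasDerivWithinAt) fun x hx => ?_
  rw [interior_Icc] at hx
  obtain ⟨hx0, hx1⟩ := hx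
  have hg : 0 ≤ 16 * (A - c) + 32 * c * x ^ 2 - 3 * B * x := by
    -- `g(x) - g(1)` factors as below, and `g(1) = 16 (A + c) - 3 B`.
    have hdecr : 0 ≤ (1 - x) * (3 * B - 32 * c * (1 + x)) :=
      mul_nonneg (by linarith) (by nlinarith)
    nlinarith
  nlinarith

theorem sixtyFour_mul_sq_le_of_mem_Icc {q : ℝ} (hq : q ∈ Icc (0 : ℝ) 1) :
    64 * q ^ 2 ≤ 3 * ((5 - q) * (1 + q + q ^ 2) ^ 2) := by
  obtain ⟨hq0, hq1⟩ := hq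
  nlinarith [mul_nonneg hq0 hq0, sq_nonneg (q * (1 - q))]

theorem three_mul_le_sixteen_mul_of_mem_Icc {q : ℝ} (hq : q ∈ Icc (0 : ℝ) 1) :
    3 * ((5 - q) * (1 + q + q ^ 2) ^ 2) ≤ 16 * ((1 + q ^ 2) * (1 + q) ^ 2 + q ^ 2) := by
  obtain ⟨hq0, hq1⟩ := hq
  nlinarith [mul_nonneg hq0 hq0, sq_nonneg (q * (1 - q)), mul_nonneg (mul_nonneg hq0 hq0) hq0]

theorem stmt_16 (q : ℝ) (hq : q ∈ Set.Ioo (0:ℝ) 1)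
    (f : ℝ → ℝ)
    (hf : ∀ x, f x = 262144 * (1 - x^2) * ((1 + q^2)*(1 + q)^2 + q^2*x^2)
      + 32768 * x^3 * (5 - q) * (1 + q + q^2)^2) :
    AntitoneOn f (Set.Icc 0 1) ∧ IsMaxOn f (Set.Icc 0 1) 0 ∧
    f 0 = 262144 * (1 + q^2) * (1 + q)^2 := by
  have hq' := Ioo_subset_Icc_self hq
  have hf' : f = fun x => 32768 * (8 * (1 - x ^ 2) * ((1 + q ^ 2) * (1 + q) ^ 2 + q ^ 2 * x ^ 2)
      + (5 - q) * (1 + q + q ^ 2) ^ 2 * x ^ 3) := by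
    funext x
    rw [hf]
    ring
  have hanti : AntitoneOn f (Icc 0 1) := by
    rw [hf']
    exact fun a ha b hb hab => mul_le_mul_of_nonneg_left
      (antitoneOn_quartic (sq_nonneg q) (sixtyFour_mul_sq_le_of_mem_Icc hq')
        (three_mul_le_sixteen_mul_of_mem_Icc hq') ha hb hab) (by norm_num)
  exact ⟨hanti, fun x hx => hanti (left_mem_Icc.2 zero_le_one) hx hx.1, by rw [hf]; ring⟩
end
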